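/- For real symmetric positive semi-definite m×m matrices A and B, ‖A^{1/2} − B^{1/2}‖_F² ≤ m · ‖A − B‖_F. -/

import Mathlib

/-!
Put `S = A^{1/2}`, `T = B^{1/2}` and `C = S - T`, and let `v` be a unit eigenvector of the
symmetric matrix `C`, with eigenvalue `λ`. Since `A - B = S C + C T`, the quadratic form of
`A - B` at `v` is `λ (vᵀSv + vᵀTv)`, while `|λ| = |vᵀSv - vᵀTv| ≤ vᵀSv + vᵀTv` because both
forms are nonnegative. Hence `λ² ≤ |vᵀ(A - B)v| ≤ ‖A - B‖_F`, the last step by Cauchy–Schwarz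
for the pairing of `A - B` with `v vᵀ`. Summing over the `m` eigenvalues of `C` gives
`‖C‖_F² = ∑ λᵢ² ≤ m ‖A - B‖_F`.
-/

open Classical Matrix

/-- The positive semidefinite square root of a real matrix (junk value `0` if not PSD). -/
noncomputable def psdSqrt {n : ℕ} (A : Matrix (Fin n) (Fin n) ℝ) : Matrix (Fin n) (Fin n) ℝ :=
  if h : A.PosSemidef then
    h.1.eigenvectorUnitary.1 * diagonal (fun i => Real.sqrt (h.1.eigenvalues i)) *
      (star h.1.eigenvectorUnitary : Matrix (Fin n) (Fin n) ℝ)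
  else 0

noncomputable def frobNorm {n : ℕ} (M : Matrix (Fin n) (Fin n) ℝ) : ℝ :=
  Real.sqrt (Mᵀ * M).trace

namespace Matrix

variable {n : Type*} [Fintype n]

theorem IsHermitian.trace_mul_self {𝕜 : Type*} [RCLike 𝕜] [DecidableEq n] {A : Matrix n n 𝕜}
    (hA : A.IsHermitian) : (A * A).trace = ∑ i, (hA.eigenvalues i : 𝕜) ^ 2 := by
  conv_lhs => rw [hA.spectral_theorem, ← map_mul, Unitary.conjStarAlgAut_apply, trace_mul_cycle,
    Unitary.coe_star_mul_self, one_mul, diagonal_mul_diagonal, trace_diagonal]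
  simp [sq]

theorem sq_dotProduct_mulVec_le (M : Matrix n n ℝ) (v : n → ℝ) :
    (v ⬝ᵥ (M *ᵥ v)) ^ 2 ≤ (Mᵀ * M).trace * (v ⬝ᵥ v) ^ 2 := by
  have hquad : v ⬝ᵥ (M *ᵥ v) = ∑ p : n × n, (v p.1 * v p.2) * M p.1 p.2 := by
    simp only [Fintype.sum_prod_type, dotProduct, mulVec, Finset.mul_sum]
    exact Finset.sum_congr rfl fun i _ => Finset.sum_congr rfl fun j _ => by ring
  have htrace : (Mᵀ * M).trace = ∑ p : n × n, M p.1 p.2 ^ 2 := by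
    simp only [Fintype.sum_prod_type, trace, diag, mul_apply, transpose_apply, sq]
    exact Finset.sum_comm
  have hnorm : (v ⬝ᵥ v) ^ 2 = ∑ p : n × n, (v p.1 * v p.2) ^ 2 := by
    simp only [Fintype.sum_prod_type, dotProduct, sq, Finset.sum_mul_sum]
    exact Finset.sum_congr rfl fun i _ => Finset.sum_congr rfl fun j _ => by ring
  rw [hquad, htrace, hnorm, mul_comm]
  exact Finset.sum_mul_sq_le_sq_mul_sq _ _ _

theorem sq_mul_dotProduct_self_le_of_sub_mulVec_eq_smul {S T : Matrix n n ℝ}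
    (hS : S.PosSemidef) (hT : T.PosSemidef) {v : n → ℝ} {μ : ℝ} (hv : (S - T) *ᵥ v = μ • v) :
    μ ^ 2 * (v ⬝ᵥ v) ≤ |v ⬝ᵥ ((S * S - T * T) *ᵥ v)| := by
  set qS := v ⬝ᵥ (S *ᵥ v)
  set qT := v ⬝ᵥ (T *ᵥ v)
  have hqS : 0 ≤ qS := by simpa using hS.dotProduct_mulVec_nonneg v
  have hqT : 0 ≤ qT := by simpa using hT.dotProduct_mulVec_nonneg v
  have hsymm : (S - T)ᵀ = S - T := by
    simpa [conjTranspose_eq_transpose_of_trivial] using (hS.isHermitian.sub hT.isHermitian).eq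
  have hμ : μ * (v ⬝ᵥ v) = qS - qT := by
    rw [← smul_eq_mul, ← dotProduct_smul, ← hv, sub_mulVec, dotProduct_sub]
  have hquad : v ⬝ᵥ ((S * S - T * T) *ᵥ v) = μ * (qS + qT) := by
    have hsplit : S * S - T * T = S * (S - T) + (S - T) * T := by noncomm_ring
    rw [hsplit, add_mulVec, dotProduct_add, ← mulVec_mulVec, ← mulVec_mulVec, hv,
      dotProduct_mulVec v (S - T), ← mulVec_transpose, hsymm, hv, mulVec_smul,
      dotProduct_smul, smul_dotProduct, smul_eq_mul, smul_eq_mul, mul_add]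
  calc μ ^ 2 * (v ⬝ᵥ v) = |μ| * |qS - qT| := by
        have hvv : 0 ≤ v ⬝ᵥ v := by simpa using dotProduct_self_star_nonneg v
        rw [← hμ, abs_mul, abs_of_nonneg hvv, ← mul_assoc, ← sq, sq_abs]
    _ ≤ |μ| * (qS + qT) := by gcongr; exact abs_sub_le_iff.2 ⟨by linarith, by linarith⟩
    _ = |v ⬝ᵥ ((S * S - T * T) *ᵥ v)| := by
        rw [hquad, abs_mul, abs_of_nonneg (add_nonneg hqS hqT)]

end Matrix

section FinDim

variable {n : ℕ}

theorem psdSqrt_eq_conjStarAlgAut {A : Matrix (Fin n) (Fin n) ℝ} (hA : A.PosSemidef) :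
    psdSqrt A = Unitary.conjStarAlgAut ℝ _ hA.1.eigenvectorUnitary
      (diagonal fun i => √(hA.1.eigenvalues i)) := by
  rw [psdSqrt, dif_pos hA, Unitary.conjStarAlgAut_apply]

theorem psdSqrt_posSemidef {A : Matrix (Fin n) (Fin n) ℝ} (hA : A.PosSemidef) :
    (psdSqrt A).PosSemidef := by
  rw [psdSqrt_eq_conjStarAlgAut hA, Unitary.conjStarAlgAut_apply]
  simpa [star_eq_conjTranspose] using (posSemidef_diagonal_iff.2 fun i => Real.sqrt_nonneg
    (hA.1.eigenvalues i)).mul_mul_conjTranspose_same hA.1.eigenvectorUnitary.1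

theorem psdSqrt_mul_self {A : Matrix (Fin n) (Fin n) ℝ} (hA : A.PosSemidef) :
    psdSqrt A * psdSqrt A = A := by
  conv_rhs => rw [hA.1.spectral_theorem]
  rw [psdSqrt_eq_conjStarAlgAut hA, ← map_mul, diagonal_mul_diagonal]
  congr 2
  ext i
  simp [Real.mul_self_sqrt (hA.eigenvalues_nonneg i)]

theorem frobNorm_sq_eq_trace (M : Matrix (Fin n) (Fin n) ℝ) : frobNorm M ^ 2 = (Mᵀ * M).trace :=
  Real.sq_sqrt (by simpa using (posSemidef_conjTranspose_mul_self M).trace_nonneg)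

theorem abs_dotProduct_mulVec_le_frobNorm (M : Matrix (Fin n) (Fin n) ℝ) (v : Fin n → ℝ) :
    |v ⬝ᵥ (M *ᵥ v)| ≤ frobNorm M * (v ⬝ᵥ v) := by
  have hvv : 0 ≤ v ⬝ᵥ v := by simpa using dotProduct_self_star_nonneg v
  calc |v ⬝ᵥ (M *ᵥ v)| ≤ √((Mᵀ * M).trace * (v ⬝ᵥ v) ^ 2) :=
        Real.abs_le_sqrt (sq_dotProduct_mulVec_le M v)
    _ = frobNorm M * (v ⬝ᵥ v) := by rw [Real.sqrt_mul' _ (sq_nonneg _), Real.sqrt_sq hvv, frobNorm]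

theorem Matrix.IsHermitian.frobNorm_sq_eq_sum_eigenvalues_sq {C : Matrix (Fin n) (Fin n) ℝ}
    (hC : C.IsHermitian) : frobNorm C ^ 2 = ∑ i, hC.eigenvalues i ^ 2 := by
  have hCt : Cᵀ = C := by simpa [conjTranspose_eq_transpose_of_trivial] using hC.eq
  rw [frobNorm_sq_eq_trace, hCt, hC.trace_mul_self]
  rfl

theorem eigenvalues_sub_sq_le_frobNorm_mul_self_sub_mul_self {S T : Matrix (Fin n) (Fin n) ℝ}
    (hS : S.PosSemidef) (hT : T.PosSemidef) (i : Fin n) :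
    (hS.isHermitian.sub hT.isHermitian).eigenvalues i ^ 2 ≤ frobNorm (S * S - T * T) := by
  set hC := hS.isHermitian.sub hT.isHermitian
  have hunit : (hC.eigenvectorBasis i).ofLp ⬝ᵥ (hC.eigenvectorBasis i).ofLp = 1 := by
    have h := real_inner_self_eq_norm_sq (hC.eigenvectorBasis i)
    rw [hC.eigenvectorBasis.orthonormal.1 i, EuclideanSpace.inner_eq_star_dotProduct] at h
    simpa using h
  simpa only [hunit, mul_one] using
    (sq_mul_dotProduct_self_le_of_sub_mulVec_eq_smul hS hT (hC.mulVec_eigenvectorBasis i)).trans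
      (abs_dotProduct_mulVec_le_frobNorm _ _)

end FinDim

/-- For real symmetric PSD `m × m` matrices `A`, `B`:
`‖A^{1/2} − B^{1/2}‖_F² ≤ m · ‖A − B‖_F`. -/
theorem frobenius_sqrt_diff_sq_le {m : ℕ}
    (A B : Matrix (Fin m) (Fin m) ℝ) (hA : A.PosSemidef) (hB : B.PosSemidef) :
    frobNorm (psdSqrt A - psdSqrt B) ^ 2 ≤ (m : ℝ) * frobNorm (A - B) := by
  have hS := psdSqrt_posSemidef hA
  have hT := psdSqrt_posSemidef hB
  calc frobNorm (psdSqrt A - psdSqrt B) ^ 2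
      = ∑ i, (hS.isHermitian.sub hT.isHermitian).eigenvalues i ^ 2 :=
        IsHermitian.frobNorm_sq_eq_sum_eigenvalues_sq _
    _ ≤ ∑ _i : Fin m, frobNorm (A - B) := Finset.sum_le_sum fun i _ => by
        simpa only [psdSqrt_mul_self hA, psdSqrt_mul_self hB] using
          eigenvalues_sub_sq_le_frobNorm_mul_self_sub_mul_self hS hT i
    _ = m * frobNorm (A - B) := by simp
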